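/- arXiv:0908.3699 — 5 statements merged into one kernel-verified Lean document; each statement's English description precedes it below -/
import Mathlib

section
/- Let P be any interval partition of [n_1,…,n_k]. For each i ∈ {1,…,k}, the interval of P containing the standard basis vector e_i (the vector with a 1 in coordinate i and 0 elsewhere) has bottom element e_i; let a(i) denote its top element. Then for any i ≠ j, if a(i)_j > 0 then a(j)_i = 0. -/
/-- The poset `[n₁,…,n_k]`: nonzero vectors `x : Fin k → ℕ` with `x i ≤ n i` for all `i`,
ordered componentwise. -/
def ground {k : ℕ} (n : Fin k → ℕ) : Set (Fin k → ℕ) :=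
  {x | x ≠ 0 ∧ ∀ i, x i ≤ n i}

/-- The depth of an element: the sum of its coordinates. -/
def depthv {k : ℕ} (x : Fin k → ℕ) : ℕ := ∑ i, x i

/-- An interval partition of the poset `[n₁,…,n_k]`: a collection of pairs `(X,Y)` with
`X ≤ Y`, both in the poset, whose intervals `[X,Y] = Set.Icc X Y` are pairwise disjoint
and cover the poset. (Since `X` is nonzero and `Y` is bounded by `n`, each such interval
is a nonempty subset of the poset.) -/
structure IntervalPartition (k : ℕ) (n : Fin k → ℕ) where
  pairs : Set ((Fin k → ℕ) × (Fin k → ℕ))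
  bot_mem : ∀ p ∈ pairs, p.1 ∈ ground n
  top_mem : ∀ p ∈ pairs, p.2 ∈ ground n
  bot_le_top : ∀ p ∈ pairs, p.1 ≤ p.2
  covers : ∀ x ∈ ground n, ∃ p ∈ pairs, x ∈ Set.Icc p.1 p.2
  pairwise_disjoint : ∀ p ∈ pairs, ∀ q ∈ pairs, p ≠ q →
    Disjoint (Set.Icc p.1 p.2) (Set.Icc q.1 q.2)

/-- The new depth of an interval partition: the minimum over its intervals `[X,Y]`
of `depth Y`. -/
noncomputable def ndepthP {k : ℕ} {n : Fin k → ℕ} (P : IntervalPartition k n) : ℕ :=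
  sInf ((fun p => depthv p.2) '' P.pairs)

/-- The new depth of the poset `[n₁,…,n_k]`: the maximum of `ndepthP P` over all
interval partitions `P`. -/
noncomputable def ndepth {k : ℕ} (n : Fin k → ℕ) : ℕ :=
  sSup (Set.range (fun P : IntervalPartition k n => ndepthP P))

/-- For a 0-1 vector `u` (as a Boolean vector), `sVec n u` has `i`-th coordinate `n i`
if `u i = true` and `0` otherwise. -/
def sVec {k : ℕ} (n : Fin k → ℕ) (u : Fin k → Bool) : Fin k → ℕ :=
  fun i => if u i then n i else 0

/-!
Each basis vector `e i` is an atom of `ℕᵏ`, so the interval of the partition containing it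
must start at it. If both `a(i) j > 0` and `a(j) i > 0`, then `e i ⊔ e j` would lie in both
`[e i, a(i)]` and `[e j, a(j)]`; disjointness forces these intervals to coincide, yet their
bottoms differ.
-/

section SingleOne

variable {ι : Type*} [DecidableEq ι] {i : ι} {x : ι → ℕ}

lemma Pi.single_one_le_iff : Pi.single i 1 ≤ x ↔ 0 < x i := by
  refine ⟨fun h => by simpa [Nat.pos_iff_ne_zero, Nat.one_le_iff_ne_zero] using h i, fun h j => ?_⟩
  rcases eq_or_ne j i with rfl | hj
  · simpa [Nat.pos_iff_ne_zero, Nat.one_le_iff_ne_zero] using h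
  · simp [hj]

lemma Pi.eq_single_one_of_le (hx : x ≠ 0) (h : x ≤ Pi.single i 1) : x = Pi.single i 1 := by
  refine le_antisymm h (Pi.single_one_le_iff.2 (Nat.pos_of_ne_zero fun hxi => hx ?_))
  funext j
  rcases eq_or_ne j i with rfl | hj
  · exact hxi
  · simpa [hj] using h j

end SingleOne

namespace IntervalPartition

variable {k : ℕ} {n : Fin k → ℕ} (P : IntervalPartition k n) {p q : (Fin k → ℕ) × (Fin k → ℕ)}

lemma eq_of_mem_Icc (hp : p ∈ P.pairs) (hq : q ∈ P.pairs) {x : Fin k → ℕ}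
    (hxp : x ∈ Set.Icc p.1 p.2) (hxq : x ∈ Set.Icc q.1 q.2) : p = q :=
  by_contra fun hpq => Set.disjoint_left.mp (P.pairwise_disjoint p hp q hq hpq) hxp hxq

lemma bot_eq_single (hp : p ∈ P.pairs) {i : Fin k} (hi : Pi.single i 1 ∈ Set.Icc p.1 p.2) :
    p.1 = Pi.single i 1 :=
  Pi.eq_single_one_of_le (P.bot_mem p hp).1 hi.1

end IntervalPartition

theorem stmt1_general (k : ℕ) (n : Fin k → ℕ)
    (P : IntervalPartition k n) (i j : Fin k) (hij : i ≠ j)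
    (p q : (Fin k → ℕ) × (Fin k → ℕ)) (hp : p ∈ P.pairs) (hq : q ∈ P.pairs)
    (hpi : (fun t => if t = i then 1 else 0) ∈ Set.Icc p.1 p.2)
    (hqj : (fun t => if t = j then 1 else 0) ∈ Set.Icc q.1 q.2) :
    p.1 = (fun t => if t = i then 1 else 0) ∧
    q.1 = (fun t => if t = j then 1 else 0) ∧
    (0 < p.2 j → q.2 i = 0) := by
  have hsingle : ∀ l : Fin k, (fun t => if t = l then 1 else 0) = (Pi.single l 1 : Fin k → ℕ) :=
    fun l => funext fun t => (Pi.single_apply l 1 t).symm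
  simp only [hsingle] at hpi hqj ⊢
  have hp1 := P.bot_eq_single hp hpi
  have hq1 := P.bot_eq_single hq hqj
  refine ⟨hp1, hq1, fun hpj => ?_⟩
  by_contra hqi
  have hvp : Pi.single i 1 ⊔ Pi.single j 1 ∈ Set.Icc p.1 p.2 :=
    ⟨hp1 ▸ le_sup_left, sup_le hpi.2 (Pi.single_one_le_iff.2 hpj)⟩
  have hvq : Pi.single i 1 ⊔ Pi.single j 1 ∈ Set.Icc q.1 q.2 :=
    ⟨hq1 ▸ le_sup_right, sup_le (Pi.single_one_le_iff.2 (Nat.pos_of_ne_zero hqi)) hqj.2⟩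
  have hbot : (Pi.single i 1 : Fin k → ℕ) = Pi.single j 1 := by
    rw [← hp1, ← hq1, P.eq_of_mem_Icc hp hq hvp hvq]
  simpa [hij] using congrFun hbot i

/-- for any interval partition `P` of `[n₁,…,n_k]`, the interval containing
the standard basis vector `e i` has bottom `e i`; denoting its top by `a(i)`, for `i ≠ j`,
if `a(i) j > 0` then `a(j) i = 0`. -/
theorem stmt1 (k : ℕ) (hk : 1 ≤ k) (n : Fin k → ℕ) (hn : ∀ i, 1 ≤ n i)
    (P : IntervalPartition k n) (i j : Fin k) (hij : i ≠ j)
    (p q : (Fin k → ℕ) × (Fin k → ℕ)) (hp : p ∈ P.pairs) (hq : q ∈ P.pairs)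
    (hpi : (fun t => if t = i then 1 else 0) ∈ Set.Icc p.1 p.2)
    (hqj : (fun t => if t = j then 1 else 0) ∈ Set.Icc q.1 q.2) :
    p.1 = (fun t => if t = i then 1 else 0) ∧
    q.1 = (fun t => if t = j then 1 else 0) ∧
    (0 < p.2 j → q.2 i = 0) :=
  stmt1_general k n P i j hij p q hp hq hpi hqj
end

section
/- For any k ≥ 2 and multiplicities 1 ≤ n_1 ≤ n_2 ≤ … ≤ n_k, the new depth of [n_1,…,n_k] is at most max{n_1 + n_2 + … + n_{k−1}, n_k}. -/
/-- for `k ≥ 2` and `1 ≤ n₁ ≤ … ≤ n_k`,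
`ndepth [n₁,…,n_k] ≤ max (n₁ + ⋯ + n_{k-1}) n_k`. -/
theorem stmt2 (k : ℕ) (hk : 2 ≤ k) (n : Fin k → ℕ) (hn : ∀ i, 1 ≤ n i)
    (hmono : Monotone n) :
    ndepth n ≤
      max (∑ i ∈ Finset.univ.erase (⟨k - 1, by omega⟩ : Fin k), n i)
        (n ⟨k - 1, by omega⟩) := by
  classical
  set last : Fin k := ⟨k - 1, by omega⟩ with hlast
  set M := max (∑ i ∈ Finset.univ.erase last, n i) (n last) with hM
  have hSM : ∑ i ∈ Finset.univ.erase last, n i ≤ M := le_max_left _ _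
  have hnM : n last ≤ M := le_max_right _ _
  apply csSup_le'
  rintro _ ⟨P, rfl⟩
  by_contra hcon
  push_neg at hcon
  have htop : ∀ p ∈ P.pairs, M < depthv p.2 := fun p hp =>
    lt_of_lt_of_le hcon (Nat.sInf_le ⟨p, hp, rfl⟩)
  -- the unit vector at `last`
  set e : Fin k → ℕ := fun i => if i = last then 1 else 0 with he
  have heg : e ∈ ground n := by
    constructor
    · intro h
      have := congrFun h last
      simp [he] at this
    · intro i
      by_cases h : i = last
      · simp [he, h, hn]
      · simp [he, h]
  obtain ⟨p, hp, hpe⟩ := P.covers e heg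
  have hp1 : p.1 = e := by
    have hle : p.1 ≤ e := hpe.1
    have hz : ∀ j, j ≠ last → p.1 j = 0 := by
      intro j hj
      have := hle j
      simpa [he, hj] using this
    have hne : p.1 ≠ 0 := (P.bot_mem p hp).1
    have hl1 : p.1 last ≤ 1 := by simpa [he] using hle last
    have hlpos : p.1 last ≠ 0 := by
      intro h0
      apply hne
      funext j
      by_cases hj : j = last
      · simpa [hj] using h0
      · exact hz j hj
    funext j
    by_cases hj : j = last
    · subst hj; simp [he]; omega
    · simp [he, hj, hz j hj]
  have hYlast : p.2 last ≤ n last := (P.top_mem p hp).2 last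
  have hYdec : depthv p.2 = ∑ i ∈ Finset.univ.erase last, p.2 i + p.2 last := by
    rw [depthv, ← Finset.sum_erase_add _ _ (Finset.mem_univ last)]
  have hYsum : 0 < ∑ i ∈ Finset.univ.erase last, p.2 i := by
    have := htop p hp
    omega
  obtain ⟨j, hjmem, hjpos⟩ : ∃ j ∈ Finset.univ.erase last, 0 < p.2 j := by
    by_contra hc
    push_neg at hc
    have : ∑ i ∈ Finset.univ.erase last, p.2 i = 0 :=
      Finset.sum_eq_zero fun i hi => by have := hc i hi; omega
    omega
  have hjne : j ≠ last := (Finset.mem_erase.mp hjmem).1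
  -- `d` is `p.2` with last coordinate zeroed
  set d : Fin k → ℕ := fun i => if i = last then 0 else p.2 i with hd
  have hdg : d ∈ ground n := by
    constructor
    · intro h
      have := congrFun h j
      simp [hd, hjne] at this
      omega
    · intro i
      by_cases h : i = last
      · simp [hd, h]
      · simpa [hd, h] using (P.top_mem p hp).2 i
  obtain ⟨q, hq, hqd⟩ := P.covers d hdg
  have hq1last : q.1 last = 0 := by
    have := hqd.1 last
    simpa [hd] using this
  have hBdec : depthv q.2 = ∑ i ∈ Finset.univ.erase last, q.2 i + q.2 last := by
    rw [depthv, ← Finset.sum_erase_add _ _ (Finset.mem_univ last)]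
  have hBsum : ∑ i ∈ Finset.univ.erase last, q.2 i ≤ ∑ i ∈ Finset.univ.erase last, n i :=
    Finset.sum_le_sum fun i _ => (P.top_mem q hq).2 i
  have hBlast : 1 ≤ q.2 last := by
    have := htop q hq
    omega
  have hpq : p ≠ q := by
    intro h
    have : p.1 last = q.1 last := by rw [h]
    rw [hp1] at this
    simp [he] at this
    omega
  -- the common point
  set x : Fin k → ℕ := fun i => if i = last then 1 else p.2 i with hx
  have hx1 : x ∈ Set.Icc p.1 p.2 := by
    constructor
    · intro i
      rw [hp1]
      by_cases h : i = last
      · simp [he, hx, h]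
      · simp [he, hx, h]
    · intro i
      by_cases h : i = last
      · have := hpe.2 last
        simp [he] at this
        simpa [hx, h] using this
      · simp [hx, h]
  have hx2 : x ∈ Set.Icc q.1 q.2 := by
    constructor
    · intro i
      by_cases h : i = last
      · simp [hx, h, hq1last]
      · have := hqd.1 i
        simp [hd, h] at this
        simpa [hx, h] using this
    · intro i
      by_cases h : i = last
      · simpa [hx, h] using hBlast
      · have := hqd.2 i
        simp [hd, h] at this
        simpa [hx, h] using this
  exact (P.pairwise_disjoint p hp q hq hpq).le_bot ⟨hx1, hx2⟩
end

section
/- For any k ≥ 1, the new depth of the poset of nonzero 0-1 vectors of length k (i.e., [n_1,…,n_k] with all n_i = 1, equivalently the poset of nonempty subsets of {1,2,…,k} ordered by inclusion) equals ⌈k/2⌉. -/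
/-!
Upper bound: in an interval partition of the nonempty subsets of `{1, …, k}`, the singleton `{i}`
lies in an interval `[{i}, Yᵢ]`. For `i ≠ j` we cannot have both `j ∈ Yᵢ` and `i ∈ Yⱼ`, since
`{i, j}` would lie in both intervals; hence `∑ |Yᵢ| ≤ k + (k choose 2)`, and some `|Yᵢ| ≤ ⌈k/2⌉`.

Lower bound: for odd `k`, take the ground set to be `ℤ/k`. A nonempty `S` determines a unique `B`
with `S ⊆ B` and `x ∈ B ↔ x - 1 ∉ B` for all `x ∉ S` (fill each cyclic gap of `S` alternately);
these `B` are exactly the sets with no two cyclically consecutive gaps, and the intervals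
`[{x ∈ B | x - 1 ∈ B}, B]` partition the nonempty subsets. Having no consecutive gaps forces
`|B| ≥ (k + 1) / 2`, and the bottom of the interval is nonempty because `k` is odd. For even `k`,
add one point `∗` to a partition for `k - 1` together with the interval `[{∗}, everything]`.
-/

open Finset

lemma Finset.exists_card_filter_le_of_asymm {ι : Type*} [Fintype ι] [DecidableEq ι] [Nonempty ι]
    (R : ι → ι → Prop) [DecidableRel R] (hR : ∀ i j, i ≠ j → R i j → ¬R j i) :
    ∃ i, #{j | R i j} ≤ (Fintype.card ι + 1) / 2 := by
  set k := Fintype.card ι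
  have hsum : ∑ i, #{j | R i j} ≤ (k + 1).choose 2 := by
    have hpairs : ∑ i, #{j | R i j} = #{p : ι × ι | R p.1 p.2} := by
      simp only [card_filter, Fintype.sum_prod_type]
    rw [hpairs, ← Sym2.card, ← card_univ]
    refine card_le_card_of_injOn (fun p => s(p.1, p.2)) (fun _ _ => mem_coe.mpr (mem_univ _)) ?_
    rintro ⟨i, j⟩ hij ⟨i', j'⟩ hij' heq
    simp only [coe_filter, mem_univ, true_and, Set.mem_ofPred_eq] at hij hij'
    rcases Sym2.eq_iff.mp heq with ⟨rfl, rfl⟩ | ⟨rfl, rfl⟩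
    · rfl
    · by_cases h : i = j
      · subst h; rfl
      · exact absurd hij' (hR i j h hij)
  have hk : 0 < k := Fintype.card_pos
  have hlt : (k + 1).choose 2 < ∑ _i : ι, ((k + 1) / 2 + 1) := by
    rw [Nat.choose_two_right, sum_const, card_univ, smul_eq_mul, Nat.add_sub_cancel]
    refine Nat.div_lt_of_lt_mul ?_
    have : k + 1 < 2 * ((k + 1) / 2 + 1) := by omega
    nlinarith
  obtain ⟨i, -, hi⟩ := exists_lt_of_sum_lt (hsum.trans_lt hlt)
  exact ⟨i, Nat.lt_succ_iff.mp hi⟩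

section UpperBound

variable {k : ℕ} {n : Fin k → ℕ}

lemma eq_single_of_le_single {ι : Type*} [DecidableEq ι] {x : ι → ℕ} {i : ι} (hx0 : x ≠ 0)
    (hx : x ≤ Pi.single i 1) : x = Pi.single i 1 := by
  have hoff : ∀ j ≠ i, x j = 0 := fun j hj => by simpa [hj] using hx j
  have hi : x i = 1 := by
    refine le_antisymm (by simpa using hx i) (Nat.one_le_iff_ne_zero.mpr fun h0 => hx0 ?_)
    funext j
    by_cases hj : j = i
    · rw [hj, h0, Pi.zero_apply]
    · rw [hoff j hj, Pi.zero_apply]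
  funext j
  by_cases hj : j = i
  · simp [hj, hi]
  · simp [hj, hoff j hj]

lemma single_add_single_le {ι : Type*} [DecidableEq ι] {y : ι → ℕ} {i j : ι} (hij : i ≠ j)
    (hi : y i ≠ 0) (hj : y j ≠ 0) : Pi.single i 1 + Pi.single j 1 ≤ y := by
  intro t
  by_cases hti : t = i
  · subst hti
    simpa [hij] using Nat.one_le_iff_ne_zero.mpr hi
  · by_cases htj : t = j
    · subst htj
      simpa [hti] using Nat.one_le_iff_ne_zero.mpr hj
    · simp [hti, htj]

lemma depthv_eq_card_filter_ne_zero {x : Fin k → ℕ} (hx : ∀ i, x i ≤ 1) :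
    depthv x = #{i | x i ≠ 0} := by
  rw [depthv, card_filter]
  refine sum_congr rfl fun i _ => ?_
  have := hx i
  split_ifs <;> omega

namespace IntervalPartition

variable (P : IntervalPartition k n)

lemma exists_mem_fst_eq_single (i : Fin k) (hi : 1 ≤ n i) :
    ∃ p ∈ P.pairs, p.1 = Pi.single i 1 := by
  have hmem : Pi.single i 1 ∈ ground n := by
    refine ⟨fun h => by simpa using congrFun h i, fun j => ?_⟩
    by_cases hj : j = i
    · subst hj; simpa using hi
    · simp [hj]
  obtain ⟨p, hp, hle, -⟩ := P.covers _ hmem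
  exact ⟨p, hp, eq_single_of_le_single (P.bot_mem p hp).1 hle⟩

lemma snd_apply_eq_zero {p q : (Fin k → ℕ) × (Fin k → ℕ)} (hp : p ∈ P.pairs) (hq : q ∈ P.pairs)
    {i j : Fin k} (hij : i ≠ j) (hpi : p.1 = Pi.single i 1) (hqj : q.1 = Pi.single j 1)
    (hpj : p.2 j ≠ 0) : q.2 i = 0 := by
  have snd_ne_zero : ∀ r ∈ P.pairs, ∀ l, r.1 = Pi.single l 1 → r.2 l ≠ 0 := fun r hr l hrl => by
    simpa [hrl, Nat.one_le_iff_ne_zero] using P.bot_le_top r hr l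
  have hpq : p ≠ q := fun h => by simpa [hpi, hqj, hij] using congrFun (congrArg Prod.fst h) i
  by_contra hqi
  exact Set.disjoint_left.mp (P.pairwise_disjoint p hp q hq hpq)
    (show Pi.single i 1 + Pi.single j 1 ∈ Set.Icc p.1 p.2 from
      ⟨hpi ▸ le_self_add, single_add_single_le hij (snd_ne_zero p hp i hpi) hpj⟩)
    ⟨hqj ▸ le_add_self, single_add_single_le hij hqi (snd_ne_zero q hq j hqj)⟩

end IntervalPartition

end UpperBound

lemma ndepthP_le_half {k : ℕ} (hk : 1 ≤ k) (P : IntervalPartition k (fun _ => 1)) :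
    ndepthP P ≤ (k + 1) / 2 := by
  have : Nonempty (Fin k) := ⟨⟨0, hk⟩⟩
  choose p hp hpi using fun i => P.exists_mem_fst_eq_single i le_rfl
  obtain ⟨i, hi⟩ := exists_card_filter_le_of_asymm (fun i j => (p i).2 j ≠ 0)
    fun i j hij hpj => not_not.mpr (P.snd_apply_eq_zero (hp i) (hp j) hij (hpi i) (hpi j) hpj)
  calc ndepthP P ≤ depthv (p i).2 := Nat.sInf_le ⟨p i, hp i, rfl⟩
    _ = #{j | (p i).2 j ≠ 0} := depthv_eq_card_filter_ne_zero (P.top_mem _ (hp i)).2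
    _ ≤ (k + 1) / 2 := by simpa using hi

lemma le_ndepthP {k : ℕ} {n : Fin k → ℕ} {P : IntervalPartition k n} {d : ℕ}
    (hne : P.pairs.Nonempty) (h : ∀ p ∈ P.pairs, d ≤ depthv p.2) : d ≤ ndepthP P :=
  le_csInf (hne.image _) (by rintro _ ⟨p, hp, rfl⟩; exact h p hp)

section IndicatorVec

variable {ι : Type*} [DecidableEq ι] {k : ℕ} (e : ι ≃ Fin k) {A B S : Finset ι}

def indicatorVec (S : Finset ι) : Fin k → ℕ := fun i => if e.symm i ∈ S then 1 else 0

lemma indicatorVec_le_one (S : Finset ι) (i : Fin k) : indicatorVec e S i ≤ 1 := by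
  unfold indicatorVec; split_ifs <;> omega

lemma indicatorVec_le_indicatorVec_iff : indicatorVec e A ≤ indicatorVec e B ↔ A ⊆ B := by
  refine ⟨fun h z hz => ?_, fun h i => ?_⟩
  · have := h (e z)
    simp only [indicatorVec, Equiv.symm_apply_apply, hz, if_true] at this
    by_contra hzB
    simp [hzB] at this
  · by_cases hA : e.symm i ∈ A
    · simp [indicatorVec, hA, h hA]
    · simp [indicatorVec, hA]

lemma indicatorVec_mem_ground (hS : S.Nonempty) : indicatorVec e S ∈ ground (fun _ => 1) := by
  refine ⟨fun h0 => ?_, indicatorVec_le_one e S⟩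
  obtain ⟨z, hz⟩ := hS
  simpa [indicatorVec, hz] using congrFun h0 (e z)

variable [Fintype ι]

lemma depthv_indicatorVec (S : Finset ι) : depthv (indicatorVec e S) = #S := by
  rw [depthv, ← e.sum_comp]
  simp [indicatorVec]

lemma exists_eq_indicatorVec {x : Fin k → ℕ} (hx : ∀ i, x i ≤ 1) :
    ∃ S : Finset ι, x = indicatorVec e S := by
  refine ⟨univ.filter fun z => x (e z) ≠ 0, funext fun i => ?_⟩
  have := hx i
  simp only [indicatorVec, mem_filter, mem_univ, true_and, Equiv.apply_symm_apply]
  split_ifs <;> omega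

lemma exists_nonempty_eq_indicatorVec {x : Fin k → ℕ} (hx : x ∈ ground (fun _ => 1)) :
    ∃ S : Finset ι, S.Nonempty ∧ x = indicatorVec e S := by
  obtain ⟨S, rfl⟩ := exists_eq_indicatorVec e hx.2
  refine ⟨S, nonempty_iff_ne_empty.mpr fun hS => hx.1 ?_, rfl⟩
  ext i
  simp [indicatorVec, hS]

end IndicatorVec

/-- A partition of the nonempty subsets of `ι` into intervals of the subset lattice, recorded
by the map sending each nonempty `S` to the interval `[(block S).1, (block S).2]` containing it. -/
structure SubsetIntervalPartition (ι : Type*) where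
  block : Finset ι → Finset ι × Finset ι
  nonempty_fst : ∀ S : Finset ι, S.Nonempty → (block S).1.Nonempty
  fst_subset : ∀ S : Finset ι, S.Nonempty → (block S).1 ⊆ S
  subset_snd : ∀ S : Finset ι, S.Nonempty → S ⊆ (block S).2
  block_eq : ∀ S T : Finset ι, S.Nonempty → (block S).1 ⊆ T → T ⊆ (block S).2 → block T = block S

namespace SubsetIntervalPartition

variable {ι : Type*} [Fintype ι] [DecidableEq ι] (P : SubsetIntervalPartition ι) {k : ℕ}
  (e : ι ≃ Fin k)

def toIntervalPartition : IntervalPartition k (fun _ => 1) where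
  pairs := (fun S => (indicatorVec e (P.block S).1, indicatorVec e (P.block S).2)) ''
    {S | S.Nonempty}
  bot_mem := by
    rintro _ ⟨S, hS, rfl⟩
    exact indicatorVec_mem_ground e (P.nonempty_fst S hS)
  top_mem := by
    rintro _ ⟨S, hS, rfl⟩
    exact indicatorVec_mem_ground e (hS.mono (P.subset_snd S hS))
  bot_le_top := by
    rintro _ ⟨S, hS, rfl⟩
    exact (indicatorVec_le_indicatorVec_iff e).mpr ((P.fst_subset S hS).trans (P.subset_snd S hS))
  covers := by
    intro x hx
    obtain ⟨S, hS, rfl⟩ := exists_nonempty_eq_indicatorVec e hx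
    exact ⟨_, ⟨S, hS, rfl⟩, (indicatorVec_le_indicatorVec_iff e).mpr (P.fst_subset S hS),
      (indicatorVec_le_indicatorVec_iff e).mpr (P.subset_snd S hS)⟩
  pairwise_disjoint := by
    rintro _ ⟨S, hS, rfl⟩ _ ⟨T, hT, rfl⟩ hne
    refine Set.disjoint_left.mpr fun x hxS hxT => hne ?_
    obtain ⟨U, rfl⟩ := exists_eq_indicatorVec e fun i => (hxS.2 i).trans (indicatorVec_le_one e _ i)
    simp only [Set.mem_Icc, indicatorVec_le_indicatorVec_iff] at hxS hxT
    simp only [← P.block_eq S U hS hxS.1 hxS.2, ← P.block_eq T U hT hxT.1 hxT.2]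

lemma le_ndepthP_toIntervalPartition [Nonempty ι] {d : ℕ}
    (h : ∀ S : Finset ι, S.Nonempty → d ≤ #(P.block S).2) :
    d ≤ ndepthP (P.toIntervalPartition e) :=
  le_ndepthP ⟨_, univ, univ_nonempty, rfl⟩ <| by
    rintro _ ⟨S, hS, rfl⟩
    simpa [depthv_indicatorVec] using h S hS

end SubsetIntervalPartition

namespace Finset
variable {α : Type*} {A : Finset α} {S : Finset (Option α)}

lemma map_some_subset_iff_subset_eraseNone : A.map .some ⊆ S ↔ A ⊆ eraseNone S := by
  simp [subset_iff, mem_eraseNone]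

lemma subset_map_some_iff_subset_eraseNone :
    S ⊆ A.map .some ↔ none ∉ S ∧ eraseNone S ⊆ A := by
  simp only [subset_iff, mem_map, Function.Embedding.some_apply, mem_eraseNone]
  refine ⟨fun h => ⟨fun hn => by simpa using h hn, fun x hx => by simpa using h hx⟩, ?_⟩
  rintro ⟨hn, h⟩ (_ | x) hx
  · exact absurd hx hn
  · exact ⟨x, h hx, rfl⟩

lemma eraseNone_nonempty (hS : S.Nonempty) (hn : none ∉ S) : (eraseNone S).Nonempty := by
  obtain ⟨_ | x, hx⟩ := hS
  · exact absurd hx hn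
  · exact ⟨x, mem_eraseNone.mpr hx⟩

end Finset

namespace SubsetIntervalPartition

variable {ι : Type*} [Fintype ι] [DecidableEq ι] (P : SubsetIntervalPartition ι)

def option : SubsetIntervalPartition (Option ι) where
  block S := if none ∈ S then ({none}, univ)
    else ((P.block (eraseNone S)).1.map .some, (P.block (eraseNone S)).2.map .some)
  nonempty_fst S hS := by
    split_ifs with hn
    · exact singleton_nonempty none
    · exact (P.nonempty_fst _ (eraseNone_nonempty hS hn)).map
  fst_subset S hS := by
    split_ifs with hn
    · exact singleton_subset_iff.mpr hn
    · exact map_some_subset_iff_subset_eraseNone.mpr (P.fst_subset _ (eraseNone_nonempty hS hn))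
  subset_snd S hS := by
    split_ifs with hn
    · exact subset_univ S
    · exact subset_map_some_iff_subset_eraseNone.mpr
        ⟨hn, P.subset_snd _ (eraseNone_nonempty hS hn)⟩
  block_eq S T hS hfst hsnd := by
    by_cases hn : none ∈ S
    · simp only [hn, if_true] at hfst ⊢
      simp [singleton_subset_iff.mp hfst]
    · simp only [hn, if_false] at hfst hsnd ⊢
      obtain ⟨hnT, hsndT⟩ := subset_map_some_iff_subset_eraseNone.mp hsnd
      rw [if_neg hnT, P.block_eq _ _ (eraseNone_nonempty hS hn)
        (map_some_subset_iff_subset_eraseNone.mp hfst) hsndT]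

lemma le_card_option_block_snd {d : ℕ} (hP : ∀ S : Finset ι, S.Nonempty → d ≤ #(P.block S).2)
    (hd : d ≤ Fintype.card ι + 1) (S : Finset (Option ι)) (hS : S.Nonempty) :
    d ≤ #(P.option.block S).2 := by
  by_cases hn : none ∈ S
  · simpa [option, hn] using hd
  · simpa [option, hn] using hP _ (eraseNone_nonempty hS hn)

end SubsetIntervalPartition

namespace CyclicFill

variable {k : ℕ} {S T B : Finset (ZMod k)}

noncomputable def backDist (S : Finset (ZMod k)) (x : ZMod k) : ℕ :=
  sInf {n : ℕ | x - n ∈ S}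

lemma backDist_eq_zero {x : ZMod k} (hx : x ∈ S) : backDist S x = 0 :=
  Nat.sInf_eq_zero.mpr (Or.inl (by simpa using hx))

lemma backDist_eq_backDist_sub_one_add_one [NeZero k] (hS : S.Nonempty) {x : ZMod k}
    (hx : x ∉ S) : backDist S x = backDist S (x - 1) + 1 := by
  have hpos : 1 ≤ sInf {n : ℕ | x - n ∈ S} := by
    obtain ⟨s, hs⟩ := hS
    refine Nat.one_le_iff_ne_zero.mpr fun h => ?_
    rcases Nat.sInf_eq_zero.mp h with h0 | hempty
    · exact hx (by simpa using h0)
    · exact (Set.eq_empty_iff_forall_notMem.mp hempty) (x - s).val (by simpa using hs)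
  rw [backDist, ← Nat.sInf_add hpos, backDist]
  congr 2
  ext n
  simp only [Set.mem_ofPred_eq, Nat.cast_add, Nat.cast_one, sub_add_eq_sub_sub_swap]

def IsFillOf (S B : Finset (ZMod k)) : Prop :=
  S ⊆ B ∧ ∀ x ∉ S, (x ∈ B ↔ x - 1 ∉ B)

/-- Each cyclic gap `s + 1, …, s + g` of `S` is filled at the even offsets `s + 2, s + 4, …`. -/
noncomputable def fill [NeZero k] (S : Finset (ZMod k)) : Finset (ZMod k) :=
  univ.filter fun x => Even (backDist S x)

lemma isFillOf_fill [NeZero k] (hS : S.Nonempty) : IsFillOf S (fill S) := by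
  refine ⟨fun x hx => by simp [fill, backDist_eq_zero hx], fun x hx => ?_⟩
  simp [fill, backDist_eq_backDist_sub_one_add_one hS hx, Nat.even_add_one]

lemma IsFillOf.eq [NeZero k] {B' : Finset (ZMod k)} (hS : S.Nonempty) (hB : IsFillOf S B)
    (hB' : IsFillOf S B') : B = B' := by
  have key : ∀ n : ℕ, ∀ x : ZMod k, x - n ∈ S → (x ∈ B ↔ x ∈ B') := by
    intro n
    induction n with
    | zero => exact fun x hx => iff_of_true (hB.1 (by simpa using hx)) (hB'.1 (by simpa using hx))
    | succ n ih =>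
      intro x hx
      by_cases hxS : x ∈ S
      · exact iff_of_true (hB.1 hxS) (hB'.1 hxS)
      · rw [hB.2 x hxS, hB'.2 x hxS, ih (x - 1) (by simpa [sub_sub, add_comm] using hx)]
  obtain ⟨s, hs⟩ := hS
  ext x
  exact key (x - s).val x (by simpa using hs)

def core (B : Finset (ZMod k)) : Finset (ZMod k) := B.filter fun x => x - 1 ∈ B

lemma IsFillOf.sub_one_mem (h : IsFillOf S B) {x : ZMod k} (hx : x ∉ B) : x - 1 ∈ B := by
  by_contra hx1
  exact hx ((h.2 x fun hxS => hx (h.1 hxS)).mpr hx1)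

lemma IsFillOf.core_subset (h : IsFillOf S B) : core B ⊆ S := fun x hx => by
  obtain ⟨hxB, hx1B⟩ := mem_filter.mp hx
  by_contra hxS
  exact (h.2 x hxS).mp hxB hx1B

lemma isFillOf_of_core_subset (hB : ∀ x ∉ B, x - 1 ∈ B) (hcore : core B ⊆ T) (hT : T ⊆ B) :
    IsFillOf T B :=
  ⟨hT, fun x hxT => ⟨fun hxB hx1B => hxT (hcore (mem_filter.mpr ⟨hxB, hx1B⟩)),
    fun hx1B => by_contra fun hxB => hx1B (hB x hxB)⟩⟩

variable [NeZero k]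

lemma card_compl_le_card (hB : ∀ x ∉ B, x - 1 ∈ B) : #Bᶜ ≤ #B :=
  calc #Bᶜ = #(Bᶜ.image (· - 1)) := (card_image_of_injective _ sub_left_injective).symm
    _ ≤ #B := card_le_card fun y hy => by
      obtain ⟨x, hx, rfl⟩ := mem_image.mp hy
      exact hB x (mem_compl.mp hx)

lemma card_add_card_compl_zmod (B : Finset (ZMod k)) : #B + #Bᶜ = k := by
  rw [Finset.card_add_card_compl, ZMod.card]

lemma core_nonempty (hk : Odd k) (hB : ∀ x ∉ B, x - 1 ∈ B) : (core B).Nonempty := by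
  by_contra hempty
  have hle : #B ≤ #Bᶜ :=
    calc #B = #(B.image (· + 1)) := (card_image_of_injective _ (add_left_injective 1)).symm
      _ ≤ #Bᶜ := card_le_card fun y hy => by
        obtain ⟨x, hx, rfl⟩ := mem_image.mp hy
        refine mem_compl.mpr fun hx1 => hempty ⟨x + 1, ?_⟩
        simpa [core, hx1] using hx
  have := card_compl_le_card hB
  have := card_add_card_compl_zmod B
  obtain ⟨m, rfl⟩ := hk
  omega

noncomputable def subsetIntervalPartition (hk : Odd k) : SubsetIntervalPartition (ZMod k) where
  block S := (core (fill S), fill S)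
  nonempty_fst _ hS := core_nonempty hk fun _ => (isFillOf_fill hS).sub_one_mem
  fst_subset _ hS := (isFillOf_fill hS).core_subset
  subset_snd _ hS := (isFillOf_fill hS).1
  block_eq S T hS hcore hT := by
    have hB := isFillOf_fill hS
    have hTne : T.Nonempty := (core_nonempty hk fun _ => hB.sub_one_mem).mono hcore
    have : fill T = fill S :=
      (isFillOf_fill hTne).eq hTne (isFillOf_of_core_subset (fun _ => hB.sub_one_mem) hcore hT)
    simp only [this]

lemma le_card_fill (S : Finset (ZMod k)) (hS : S.Nonempty) : (k + 1) / 2 ≤ #(fill S) := by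
  have := card_compl_le_card fun _ => (isFillOf_fill hS).sub_one_mem
  have := card_add_card_compl_zmod (fill S)
  omega

end CyclicFill

lemma exists_half_le_ndepthP {k : ℕ} (hk : 1 ≤ k) :
    ∃ P : IntervalPartition k (fun _ => 1), (k + 1) / 2 ≤ ndepthP P := by
  rcases Nat.even_or_odd k with hk2 | hk2
  · obtain ⟨m, rfl⟩ : ∃ m, k = m + 1 := ⟨k - 1, by omega⟩
    have hm : Odd m := Nat.not_even_iff_odd.mp (Nat.even_add_one.mp hk2)
    have : NeZero m := ⟨hm.pos.ne'⟩
    have hhalf : (m + 1 + 1) / 2 = (m + 1) / 2 := by obtain ⟨r, rfl⟩ := hm; omega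
    refine ⟨_, (CyclicFill.subsetIntervalPartition hm).option.le_ndepthP_toIntervalPartition
      (Fintype.equivFinOfCardEq (by simp)) ?_⟩
    refine SubsetIntervalPartition.le_card_option_block_snd _ (fun S hS => ?_) (by rw [ZMod.card]; omega)
    rw [hhalf]
    exact CyclicFill.le_card_fill S hS
  · have : NeZero k := ⟨hk2.pos.ne'⟩
    exact ⟨_, (CyclicFill.subsetIntervalPartition hk2).le_ndepthP_toIntervalPartition
      (ZMod.finEquiv k).symm.toEquiv CyclicFill.le_card_fill⟩

/-- the new depth of the poset of nonzero 0-1 vectors of length `k`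
(all multiplicities equal to 1) is `⌈k/2⌉`. -/
theorem stmt3 (k : ℕ) (hk : 1 ≤ k) :
    ndepth (fun _ : Fin k => 1) = (k + 1) / 2 := by
  obtain ⟨P, hP⟩ := exists_half_le_ndepthP hk
  refine IsGreatest.csSup_eq ⟨⟨P, le_antisymm (ndepthP_le_half hk P) hP⟩, ?_⟩
  rintro _ ⟨Q, rfl⟩
  exact ndepthP_le_half hk Q
end

section
/- For any multiplicities 1 ≤ n_1 ≤ n_2, the new depth of [n_1, n_2] equals n_2. -/
lemma IntervalPartition.eq_of_mem_Icc_s8 {k : ℕ} {n : Fin k → ℕ} (P : IntervalPartition k n)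
    {p q : (Fin k → ℕ) × (Fin k → ℕ)} (hp : p ∈ P.pairs) (hq : q ∈ P.pairs) {x : Fin k → ℕ}
    (hxp : x ∈ Set.Icc p.1 p.2) (hxq : x ∈ Set.Icc q.1 q.2) : p = q := by
  by_contra hpq
  exact Set.disjoint_left.mp (P.pairwise_disjoint p hp q hq hpq) hxp hxq

lemma ndepthP_le_depthv {k : ℕ} {n : Fin k → ℕ} (P : IntervalPartition k n)
    {p : (Fin k → ℕ) × (Fin k → ℕ)} (hp : p ∈ P.pairs) : ndepthP P ≤ depthv p.2 :=
  Nat.sInf_le ⟨p, hp, rfl⟩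

lemma ndepth_eq_of_forall_le_of_exists_le {k : ℕ} {n : Fin k → ℕ} {m : ℕ}
    (hle : ∀ P : IntervalPartition k n, ndepthP P ≤ m)
    (hge : ∃ P : IntervalPartition k n, m ≤ ndepthP P) : ndepth n = m := by
  obtain ⟨P₀, hP₀⟩ := hge
  have hbdd : BddAbove (Set.range fun P : IntervalPartition k n => ndepthP P) :=
    ⟨m, by rintro _ ⟨P, rfl⟩; exact hle P⟩
  refine le_antisymm (csSup_le ⟨_, P₀, rfl⟩ ?_) (hP₀.trans (le_csSup hbdd ⟨P₀, rfl⟩))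
  rintro _ ⟨P, rfl⟩
  exact hle P

lemma depthv_fin_two (x : Fin 2 → ℕ) : depthv x = x 0 + x 1 := by
  simp [depthv, Fin.sum_univ_two]

lemma le_iff_fin_two {x y : Fin 2 → ℕ} : x ≤ y ↔ x 0 ≤ y 0 ∧ x 1 ≤ y 1 := by
  simp only [Pi.le_def, Fin.forall_fin_two]

lemma mem_Icc_fin_two {x y z : Fin 2 → ℕ} :
    x ∈ Set.Icc y z ↔ y 0 ≤ x 0 ∧ x 0 ≤ z 0 ∧ y 1 ≤ x 1 ∧ x 1 ≤ z 1 := by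
  simp only [Set.mem_Icc, le_iff_fin_two]
  tauto

lemma mem_ground_fin_two {a b : ℕ} {x : Fin 2 → ℕ} :
    x ∈ ground ![a, b] ↔ (x 0 ≠ 0 ∨ x 1 ≠ 0) ∧ x 0 ≤ a ∧ x 1 ≤ b := by
  simp only [ground, Set.mem_ofPred_eq, Fin.forall_fin_two, ne_eq, funext_iff, Pi.zero_apply,
    Matrix.cons_val_zero, Matrix.cons_val_one, not_and_or]

lemma ndepthP_le_max {a b : ℕ} (ha : 1 ≤ a) (hb : 1 ≤ b) (P : IntervalPartition 2 ![a, b]) :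
    ndepthP P ≤ max a b := by
  obtain ⟨p, hp, hp₁, hp₂⟩ := P.covers ![1, 0] (mem_ground_fin_two.mpr (by simpa using ha))
  obtain ⟨q, hq, hq₁, hq₂⟩ := P.covers ![0, 1] (mem_ground_fin_two.mpr (by simpa using hb))
  simp only [le_iff_fin_two, Matrix.cons_val_zero, Matrix.cons_val_one] at hp₁ hp₂ hq₁ hq₂
  have hpt := mem_ground_fin_two.mp (P.top_mem p hp)
  have hqt := mem_ground_fin_two.mp (P.top_mem q hq)
  by_cases hp₂₁ : p.2 1 = 0
  · calc ndepthP P ≤ depthv p.2 := ndepthP_le_depthv P hp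
      _ ≤ max a b := by rw [depthv_fin_two]; omega
  by_cases hq₂₀ : q.2 0 = 0
  · calc ndepthP P ≤ depthv q.2 := ndepthP_le_depthv P hq
      _ ≤ max a b := by rw [depthv_fin_two]; omega
  have hpq : p = q := P.eq_of_mem_Icc_s8 hp hq (x := ![1, 1])
    (mem_Icc_fin_two.mpr (by simp only [Matrix.cons_val_zero, Matrix.cons_val_one]; omega))
    (mem_Icc_fin_two.mpr (by simp only [Matrix.cons_val_zero, Matrix.cons_val_one]; omega))
  subst hpq
  have hpb := mem_ground_fin_two.mp (P.bot_mem p hp)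
  omega

def columnPartition (a b : ℕ) (hb : 1 ≤ b) : IntervalPartition 2 ![a, b] where
  pairs := (fun c => (![c, if c = 0 then 1 else 0], ![c, b])) '' Set.Iic a
  bot_mem := by
    rintro _ ⟨c, hc, rfl⟩
    simp only [Set.mem_Iic] at hc
    refine mem_ground_fin_two.mpr ?_
    dsimp only
    split_ifs <;> simp <;> omega
  top_mem := by
    rintro _ ⟨c, hc, rfl⟩
    simp only [Set.mem_Iic] at hc
    refine mem_ground_fin_two.mpr ?_
    simp; omega
  bot_le_top := by
    rintro _ ⟨c, -, rfl⟩
    refine le_iff_fin_two.mpr ?_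
    dsimp only
    split_ifs <;> simp [hb]
  covers := by
    intro x hx
    have hx' := mem_ground_fin_two.mp hx
    refine ⟨_, ⟨x 0, hx'.2.1, rfl⟩, mem_Icc_fin_two.mpr ?_⟩
    dsimp only
    split_ifs <;> simp <;> omega
  pairwise_disjoint := by
    rintro _ ⟨c, -, rfl⟩ _ ⟨d, -, rfl⟩ hcd
    refine Set.disjoint_left.mpr fun x hxc hxd => hcd ?_
    have hc := mem_Icc_fin_two.mp hxc
    have hd := mem_Icc_fin_two.mp hxd
    simp only [Matrix.cons_val_zero] at hc hd
    rw [show c = d by omega]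

lemma le_ndepthP_columnPartition (a b : ℕ) (hb : 1 ≤ b) :
    b ≤ ndepthP (columnPartition a b hb) := by
  refine le_csInf ⟨_, _, ⟨0, Nat.zero_le a, rfl⟩, rfl⟩ ?_
  rintro _ ⟨_, ⟨c, -, rfl⟩, rfl⟩
  simp [depthv_fin_two]

/-- for `1 ≤ n₁ ≤ n₂`, the new depth of `[n₁, n₂]` is `n₂`. -/
theorem stmt8 (n₁ n₂ : ℕ) (h₁ : 1 ≤ n₁) (h₁₂ : n₁ ≤ n₂) :
    ndepth ![n₁, n₂] = n₂ := by
  have h₂ : 1 ≤ n₂ := h₁.trans h₁₂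
  refine ndepth_eq_of_forall_le_of_exists_le (fun P => ?_) ⟨_, le_ndepthP_columnPartition n₁ n₂ h₂⟩
  simpa [max_eq_right h₁₂] using ndepthP_le_max h₁ h₂ P
end

section
/- For any multiplicities 1 ≤ n_1 ≤ n_2 ≤ n_3, the new depth of [n_1, n_2, n_3] equals max{n_3, n_1 + n_2}. -/
section Stmt9Aux

private lemma le3 {x y : Fin 3 → ℕ} : x ≤ y ↔ x 0 ≤ y 0 ∧ x 1 ≤ y 1 ∧ x 2 ≤ y 2 := by
  constructor
  · intro h; exact ⟨h 0, h 1, h 2⟩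
  · rintro ⟨a, b, c⟩ i; fin_cases i <;> assumption

private lemma mem_Icc3 {a b x : Fin 3 → ℕ} :
    x ∈ Set.Icc a b ↔ (a 0 ≤ x 0 ∧ a 1 ≤ x 1 ∧ a 2 ≤ x 2) ∧
      (x 0 ≤ b 0 ∧ x 1 ≤ b 1 ∧ x 2 ≤ b 2) := by
  rw [Set.mem_Icc, le3, le3]

private lemma ne0_3 {x : Fin 3 → ℕ} : x ≠ 0 ↔ ¬(x 0 = 0 ∧ x 1 = 0 ∧ x 2 = 0) := by
  constructor
  · intro h hc
    exact h (by funext i; fin_cases i <;> simp [hc.1, hc.2.1, hc.2.2])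
  · intro h hx
    exact h (by simp [hx])

private lemma mem_ground3 {n x : Fin 3 → ℕ} :
    x ∈ ground n ↔ ¬(x 0 = 0 ∧ x 1 = 0 ∧ x 2 = 0) ∧ (x 0 ≤ n 0 ∧ x 1 ≤ n 1 ∧ x 2 ≤ n 2) := by
  unfold ground
  rw [Set.mem_setOf_eq, ne0_3]
  constructor
  · rintro ⟨h1, h2⟩; exact ⟨h1, h2 0, h2 1, h2 2⟩
  · rintro ⟨h1, h2⟩; exact ⟨h1, fun i => by fin_cases i <;> tauto⟩

private lemma depth3 (x : Fin 3 → ℕ) : depthv x = x 0 + x 1 + x 2 := by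
  simp [depthv, Fin.sum_univ_three]

/-- The "columns" partition, giving `ndepth ≥ n₃` when `n₁ + n₂ ≤ n₃`. -/
private def PA (n₁ n₂ n₃ : ℕ) (h₃ : 1 ≤ n₃) (hle : n₁ + n₂ ≤ n₃) :
    IntervalPartition 3 ![n₁, n₂, n₃] where
  pairs :=
    {p : (Fin 3 → ℕ) × (Fin 3 → ℕ) | ∃ a b : ℕ, 0 < a + b ∧ a ≤ n₁ ∧ b ≤ n₂ ∧
        p = (![a, b, 0], ![a, b, n₃ - (a + b)])} ∪
    {p : (Fin 3 → ℕ) × (Fin 3 → ℕ) | ∃ a b c : ℕ, a ≤ n₁ ∧ b ≤ n₂ ∧ n₃ - (a + b) < c ∧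
        c ≤ n₃ ∧ p = (![a, b, c], ![a, b, c])} ∪
    {(![0, 0, 1], ![0, 0, n₃])}
  bot_mem := by
    rintro p ((⟨a, b, hab, ha, hb, rfl⟩ | ⟨a, b, c, ha, hb, hc1, hc2, rfl⟩) | rfl) <;>
      · rw [mem_ground3]
        simp only [Matrix.cons_val_zero, Matrix.cons_val_one, Matrix.head_cons,
          Matrix.cons_val_two, Matrix.tail_cons]
        omega
  top_mem := by
    rintro p ((⟨a, b, hab, ha, hb, rfl⟩ | ⟨a, b, c, ha, hb, hc1, hc2, rfl⟩) | rfl) <;>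
      · rw [mem_ground3]
        simp only [Matrix.cons_val_zero, Matrix.cons_val_one, Matrix.head_cons,
          Matrix.cons_val_two, Matrix.tail_cons]
        omega
  bot_le_top := by
    rintro p ((⟨a, b, hab, ha, hb, rfl⟩ | ⟨a, b, c, ha, hb, hc1, hc2, rfl⟩) | rfl) <;>
      · rw [le3]
        simp only [Matrix.cons_val_zero, Matrix.cons_val_one, Matrix.head_cons,
          Matrix.cons_val_two, Matrix.tail_cons]
        omega
  covers := by
    intro x hx
    rw [mem_ground3] at hx
    simp only [Matrix.cons_val_zero, Matrix.cons_val_one, Matrix.head_cons,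
      Matrix.cons_val_two, Matrix.tail_cons] at hx
    obtain ⟨hnz, hb0, hb1, hb2⟩ := hx
    by_cases h00 : x 0 = 0 ∧ x 1 = 0
    · refine ⟨(![0, 0, 1], ![0, 0, n₃]), Set.mem_union_right _ rfl, ?_⟩
      rw [mem_Icc3]
      simp only [Matrix.cons_val_zero, Matrix.cons_val_one, Matrix.head_cons,
        Matrix.cons_val_two, Matrix.tail_cons]
      omega
    · by_cases hc : x 2 ≤ n₃ - (x 0 + x 1)
      · refine ⟨(![x 0, x 1, 0], ![x 0, x 1, n₃ - (x 0 + x 1)]),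
          Set.mem_union_left _ (Set.mem_union_left _ ⟨x 0, x 1, by omega, hb0, hb1, rfl⟩), ?_⟩
        rw [mem_Icc3]
        simp only [Matrix.cons_val_zero, Matrix.cons_val_one, Matrix.head_cons,
          Matrix.cons_val_two, Matrix.tail_cons]
        omega
      · refine ⟨(![x 0, x 1, x 2], ![x 0, x 1, x 2]),
          Set.mem_union_left _ (Set.mem_union_right _
            ⟨x 0, x 1, x 2, hb0, hb1, by omega, hb2, rfl⟩), ?_⟩
        rw [mem_Icc3]
        simp only [Matrix.cons_val_zero, Matrix.cons_val_one, Matrix.head_cons,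
          Matrix.cons_val_two, Matrix.tail_cons]
        omega
  pairwise_disjoint := by
    intro p hp q hq hne
    rw [Set.disjoint_left]
    intro z hz hz'
    rcases hp with (⟨a, b, hab, ha, hb, rfl⟩ | ⟨a, b, c, ha, hb, hc1, hc2, rfl⟩) | rfl <;>
        rcases hq with (⟨a', b', hab', ha', hb', rfl⟩ | ⟨a', b', c', ha', hb', hc1', hc2', rfl⟩) | rfl <;>
        rw [mem_Icc3] at hz hz' <;>
        simp only [Matrix.cons_val_zero, Matrix.cons_val_one, Matrix.head_cons,
          Matrix.cons_val_two, Matrix.tail_cons] at hz hz'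
    -- col / col
    · refine absurd ?_ hne
      obtain rfl : a = a' := by omega
      obtain rfl : b = b' := by omega
      rfl
    -- col / single
    · omega
    -- col / axis
    · omega
    -- single / col
    · omega
    -- single / single
    · refine absurd ?_ hne
      obtain rfl : a = a' := by omega
      obtain rfl : b = b' := by omega
      obtain rfl : c = c' := by omega
      rfl
    -- single / axis
    · omega
    -- axis / col
    · omega
    -- axis / single
    · omega
    -- axis / axis
    · exact hne rfl

/-- The 4-interval partition, giving `ndepth ≥ n₁ + n₂`. -/
private def PB (n₁ n₂ n₃ : ℕ) (h₁ : 1 ≤ n₁) (h₂ : 1 ≤ n₂) (h₃ : 1 ≤ n₃) :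
    IntervalPartition 3 ![n₁, n₂, n₃] where
  pairs := {(![0,0,1], ![0,n₂,n₃]), (![1,0,0], ![n₁,0,n₃]),
            (![0,1,0], ![n₁,n₂,0]), (![1,1,1], ![n₁,n₂,n₃])}
  bot_mem := by
    rintro p (rfl | rfl | rfl | rfl) <;>
      · rw [mem_ground3]
        simp only [Matrix.cons_val_zero, Matrix.cons_val_one, Matrix.head_cons,
          Matrix.cons_val_two, Matrix.tail_cons]
        omega
  top_mem := by
    rintro p (rfl | rfl | rfl | rfl) <;>
      · rw [mem_ground3]
        simp only [Matrix.cons_val_zero, Matrix.cons_val_one, Matrix.head_cons,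
          Matrix.cons_val_two, Matrix.tail_cons]
        omega
  bot_le_top := by
    rintro p (rfl | rfl | rfl | rfl) <;>
      · rw [le3]
        simp only [Matrix.cons_val_zero, Matrix.cons_val_one, Matrix.head_cons,
          Matrix.cons_val_two, Matrix.tail_cons]
        omega
  covers := by
    intro x hx
    rw [mem_ground3] at hx
    simp only [Matrix.cons_val_zero, Matrix.cons_val_one, Matrix.head_cons,
      Matrix.cons_val_two, Matrix.tail_cons] at hx
    obtain ⟨hnz, hb0, hb1, hb2⟩ := hx
    rcases Nat.eq_zero_or_pos (x 0) with h0 | h0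
    · rcases Nat.eq_zero_or_pos (x 2) with h2 | h2
      · refine ⟨(![0,1,0], ![n₁,n₂,0]), by simp, ?_⟩
        rw [mem_Icc3]
        simp only [Matrix.cons_val_zero, Matrix.cons_val_one, Matrix.head_cons,
          Matrix.cons_val_two, Matrix.tail_cons]
        omega
      · refine ⟨(![0,0,1], ![0,n₂,n₃]), by simp, ?_⟩
        rw [mem_Icc3]
        simp only [Matrix.cons_val_zero, Matrix.cons_val_one, Matrix.head_cons,
          Matrix.cons_val_two, Matrix.tail_cons]
        omega
    · rcases Nat.eq_zero_or_pos (x 1) with h1' | h1'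
      · refine ⟨(![1,0,0], ![n₁,0,n₃]), by simp, ?_⟩
        rw [mem_Icc3]
        simp only [Matrix.cons_val_zero, Matrix.cons_val_one, Matrix.head_cons,
          Matrix.cons_val_two, Matrix.tail_cons]
        omega
      · rcases Nat.eq_zero_or_pos (x 2) with h2 | h2
        · refine ⟨(![0,1,0], ![n₁,n₂,0]), by simp, ?_⟩
          rw [mem_Icc3]
          simp only [Matrix.cons_val_zero, Matrix.cons_val_one, Matrix.head_cons,
            Matrix.cons_val_two, Matrix.tail_cons]
          omega
        · refine ⟨(![1,1,1], ![n₁,n₂,n₃]), by simp, ?_⟩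
          rw [mem_Icc3]
          simp only [Matrix.cons_val_zero, Matrix.cons_val_one, Matrix.head_cons,
            Matrix.cons_val_two, Matrix.tail_cons]
          omega
  pairwise_disjoint := by
    intro p hp q hq hne
    rw [Set.disjoint_left]
    intro z hz hz'
    rcases hp with rfl | rfl | rfl | rfl <;> rcases hq with rfl | rfl | rfl | rfl <;>
      rw [mem_Icc3] at hz hz' <;>
      simp only [Matrix.cons_val_zero, Matrix.cons_val_one, Matrix.head_cons,
        Matrix.cons_val_two, Matrix.tail_cons] at hz hz' <;>
      first
        | exact hne rfl
        | omega

end Stmt9Aux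
section Stmt9Main

private lemma forced_bot {n : Fin 3 → ℕ} {P : IntervalPartition 3 n}
    {p : (Fin 3 → ℕ) × (Fin 3 → ℕ)} (hp : p ∈ P.pairs) {e : Fin 3 → ℕ}
    (hmem : e ∈ Set.Icc p.1 p.2) (hd : e 0 + e 1 + e 2 = 1) : p.1 = e := by
  have h1 := hmem.1
  have hb := P.bot_mem p hp
  rw [mem_ground3] at hb
  have l0 : p.1 0 ≤ e 0 := h1 0
  have l1 : p.1 1 ≤ e 1 := h1 1
  have l2 : p.1 2 ≤ e 2 := h1 2
  have k0 : p.1 0 = e 0 := by omega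
  have k1 : p.1 1 = e 1 := by omega
  have k2 : p.1 2 = e 2 := by omega
  funext i
  fin_cases i
  · exact k0
  · exact k1
  · exact k2

private lemma upper9 (n₁ n₂ n₃ : ℕ) (h₁ : 1 ≤ n₁) (h₁₂ : n₁ ≤ n₂) (h₂₃ : n₂ ≤ n₃)
    (P : IntervalPartition 3 ![n₁, n₂, n₃]) : ndepthP P ≤ max n₃ (n₁ + n₂) := by
  have key : ∀ p ∈ P.pairs, ndepthP P ≤ depthv p.2 := by
    intro p hp
    exact Nat.sInf_le ⟨p, hp, rfl⟩
  have hg1 : (![1,0,0] : Fin 3 → ℕ) ∈ ground ![n₁,n₂,n₃] := by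
    rw [mem_ground3]
    simp only [Matrix.cons_val_zero, Matrix.cons_val_one, Matrix.head_cons,
      Matrix.cons_val_two, Matrix.tail_cons]
    omega
  have hg2 : (![0,1,0] : Fin 3 → ℕ) ∈ ground ![n₁,n₂,n₃] := by
    rw [mem_ground3]
    simp only [Matrix.cons_val_zero, Matrix.cons_val_one, Matrix.head_cons,
      Matrix.cons_val_two, Matrix.tail_cons]
    omega
  have hg3 : (![0,0,1] : Fin 3 → ℕ) ∈ ground ![n₁,n₂,n₃] := by
    rw [mem_ground3]
    simp only [Matrix.cons_val_zero, Matrix.cons_val_one, Matrix.head_cons,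
      Matrix.cons_val_two, Matrix.tail_cons]
    omega
  obtain ⟨p₁, hp₁, hm₁⟩ := P.covers _ hg1
  obtain ⟨p₂, hp₂, hm₂⟩ := P.covers _ hg2
  obtain ⟨p₃, hp₃, hm₃⟩ := P.covers _ hg3
  have hb₁ : p₁.1 = ![1,0,0] := forced_bot hp₁ hm₁ (by simp)
  have hb₂ : p₂.1 = ![0,1,0] := forced_bot hp₂ hm₂ (by simp)
  have hb₃ : p₃.1 = ![0,0,1] := forced_bot hp₃ hm₃ (by simp)
  by_cases c₁ : depthv p₁.2 ≤ max n₃ (n₁ + n₂)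
  · exact le_trans (key p₁ hp₁) c₁
  by_cases c₂ : depthv p₂.2 ≤ max n₃ (n₁ + n₂)
  · exact le_trans (key p₂ hp₂) c₂
  have ht₁ := P.top_mem p₁ hp₁
  have ht₂ := P.top_mem p₂ hp₂
  have ht₃ := P.top_mem p₃ hp₃
  rw [mem_ground3] at ht₁ ht₂ ht₃
  simp only [Matrix.cons_val_zero, Matrix.cons_val_one, Matrix.head_cons,
    Matrix.cons_val_two, Matrix.tail_cons] at ht₁ ht₂ ht₃
  rw [depth3] at c₁ c₂
  have hM1 : n₃ ≤ max n₃ (n₁ + n₂) := le_max_left _ _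
  have hM2 : n₁ + n₂ ≤ max n₃ (n₁ + n₂) := le_max_right _ _
  have hlt₁ := P.bot_le_top p₁ hp₁
  have hlt₂ := P.bot_le_top p₂ hp₂
  have hlt₃ := P.bot_le_top p₃ hp₃
  rw [hb₁, le3] at hlt₁
  rw [hb₂, le3] at hlt₂
  rw [hb₃, le3] at hlt₃
  simp only [Matrix.cons_val_zero, Matrix.cons_val_one, Matrix.head_cons,
    Matrix.cons_val_two, Matrix.tail_cons] at hlt₁ hlt₂ hlt₃
  -- third coordinates of the tops of p₁ and p₂ are positive
  have hz₁ : 1 ≤ p₁.2 2 := by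
    have := ht₁.2
    omega
  have hz₂ : 1 ≤ p₂.2 2 := by
    have := ht₂.2
    omega
  -- first and second coordinates of the top of p₃ vanish
  have hA0 : p₃.2 0 = 0 := by
    by_contra hA
    have hne : p₃ ≠ p₁ := by
      intro h
      have := congrFun (congrArg Prod.fst h) 0
      rw [hb₁, hb₃] at this
      simp at this
    have hdisj := P.pairwise_disjoint p₃ hp₃ p₁ hp₁ hne
    have hv₃ : (![1,0,1] : Fin 3 → ℕ) ∈ Set.Icc p₃.1 p₃.2 := by
      rw [mem_Icc3, hb₃]
      simp only [Matrix.cons_val_zero, Matrix.cons_val_one, Matrix.head_cons,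
        Matrix.cons_val_two, Matrix.tail_cons]
      omega
    have hv₁ : (![1,0,1] : Fin 3 → ℕ) ∈ Set.Icc p₁.1 p₁.2 := by
      rw [mem_Icc3, hb₁]
      simp only [Matrix.cons_val_zero, Matrix.cons_val_one, Matrix.head_cons,
        Matrix.cons_val_two, Matrix.tail_cons]
      omega
    exact Set.disjoint_left.mp hdisj hv₃ hv₁
  have hA1 : p₃.2 1 = 0 := by
    by_contra hA
    have hne : p₃ ≠ p₂ := by
      intro h
      have := congrFun (congrArg Prod.fst h) 1
      rw [hb₂, hb₃] at this
      simp at this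
    have hdisj := P.pairwise_disjoint p₃ hp₃ p₂ hp₂ hne
    have hv₃ : (![0,1,1] : Fin 3 → ℕ) ∈ Set.Icc p₃.1 p₃.2 := by
      rw [mem_Icc3, hb₃]
      simp only [Matrix.cons_val_zero, Matrix.cons_val_one, Matrix.head_cons,
        Matrix.cons_val_two, Matrix.tail_cons]
      omega
    have hv₂ : (![0,1,1] : Fin 3 → ℕ) ∈ Set.Icc p₂.1 p₂.2 := by
      rw [mem_Icc3, hb₂]
      simp only [Matrix.cons_val_zero, Matrix.cons_val_one, Matrix.head_cons,
        Matrix.cons_val_two, Matrix.tail_cons]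
      omega
    exact Set.disjoint_left.mp hdisj hv₃ hv₂
  have hfin : depthv p₃.2 ≤ max n₃ (n₁ + n₂) := by
    rw [depth3]
    have := ht₃.2
    omega
  exact le_trans (key p₃ hp₃) hfin

end Stmt9Main
/-- for `1 ≤ n₁ ≤ n₂ ≤ n₃`, the new depth of `[n₁, n₂, n₃]` is
`max n₃ (n₁ + n₂)`. -/
theorem stmt9 (n₁ n₂ n₃ : ℕ) (h₁ : 1 ≤ n₁) (h₁₂ : n₁ ≤ n₂) (h₂₃ : n₂ ≤ n₃) :
    ndepth ![n₁, n₂, n₃] = max n₃ (n₁ + n₂) := by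
  have upper := upper9 n₁ n₂ n₃ h₁ h₁₂ h₂₃
  have lower : ∃ P : IntervalPartition 3 ![n₁, n₂, n₃], max n₃ (n₁ + n₂) ≤ ndepthP P := by
    rcases le_total n₃ (n₁ + n₂) with h | h
    · refine ⟨PB n₁ n₂ n₃ h₁ (le_trans h₁ h₁₂) (by omega), ?_⟩
      rw [max_eq_right h]
      apply le_csInf
      · exact ⟨depthv ![0,n₂,n₃], ⟨(![0,0,1], ![0,n₂,n₃]), Set.mem_insert _ _, rfl⟩⟩
      · rintro b ⟨p, hp, rfl⟩
        rcases hp with rfl | rfl | rfl | rfl <;>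
          · simp only [depth3, Matrix.cons_val_zero, Matrix.cons_val_one, Matrix.head_cons,
              Matrix.cons_val_two, Matrix.tail_cons]
            omega
    · refine ⟨PA n₁ n₂ n₃ (by omega) h, ?_⟩
      rw [max_eq_left (by omega)]
      apply le_csInf
      · exact ⟨depthv ![0,0,n₃], ⟨(![0,0,1], ![0,0,n₃]), Set.mem_union_right _ rfl, rfl⟩⟩
      · rintro b ⟨p, hp, rfl⟩
        rcases hp with (⟨a, b', hab, ha, hb, rfl⟩ | ⟨a, b', c, ha, hb, hc1, hc2, rfl⟩) | rfl <;>
          · simp only [depth3, Matrix.cons_val_zero, Matrix.cons_val_one, Matrix.head_cons,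
              Matrix.cons_val_two, Matrix.tail_cons]
            omega
  obtain ⟨P₀, hP₀⟩ := lower
  have hbdd : BddAbove (Set.range fun P : IntervalPartition 3 ![n₁, n₂, n₃] => ndepthP P) := by
    refine ⟨max n₃ (n₁ + n₂), ?_⟩
    rintro b ⟨P, rfl⟩
    exact upper P
  have hne : (Set.range fun P : IntervalPartition 3 ![n₁, n₂, n₃] => ndepthP P).Nonempty :=
    ⟨ndepthP P₀, P₀, rfl⟩
  refine le_antisymm (csSup_le hne ?_) (le_trans hP₀ (le_csSup hbdd ⟨P₀, rfl⟩))
  rintro b ⟨P, rfl⟩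
  exact upper P
end
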